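/- arXiv:2504.18541 — 10 statements merged into one kernel-verified Lean document; each statement's English description precedes it below -/
import Mathlib

section
/- Let x : ℕ → S be a sequence such that x_N ∈ T(N) for every N ∈ ℕ. Then the sequence has discrepancy at most 1, i.e. |f(s)·N − n(s,N)| ≤ 1 for all s ∈ S and all N ∈ ℕ. -/
open Finset

/-- The number of occurrences of the symbol `s` among the first `N` terms of `x`. -/
def nOcc {S : Type*} [DecidableEq S] (x : ℕ → S) (s : S) (N : ℕ) : ℕ :=
  ((Finset.range N).filter fun k => x k = s).card

/-- The set `T(N)` of allowed symbols at step `N`. -/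
def TSet {S : Type*} [Fintype S] [DecidableEq S] (f : S → ℝ) (x : ℕ → S) (N : ℕ) : Set S :=
  {t | ((nOcc x t N : ℤ) = ⌊f t * (N : ℝ)⌋ ∨ ⌊f t * ((N : ℝ) + 1)⌋ = ⌊f t * (N : ℝ)⌋ + 1) ∧
    ∀ M : ℤ, (N : ℤ) < M →
      ∑ s, max 0 (⌊f s * (M : ℝ)⌋ - (nOcc x s N : ℤ) - if s = t then 1 else 0)
        ≤ M - (N : ℤ) - 1}

lemma nOcc_succ {S : Type*} [DecidableEq S] (x : ℕ → S) (s : S) (N : ℕ) :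
    nOcc x s (N + 1) = nOcc x s N + if x N = s then 1 else 0 := by
  simp only [nOcc, Finset.range_add_one, Finset.filter_insert]
  split
  · rw [Finset.card_insert_of_notMem (by simp)]
  · simp

theorem stmt_0 {S : Type*} [Fintype S] [DecidableEq S] [Nonempty S]
    (f : S → ℝ) (hf0 : ∀ s, 0 < f s) (hf1 : ∀ s, f s ≤ 1)
    (hsum : ∑ s, f s = 1)
    (x : ℕ → S) (hx : ∀ N : ℕ, x N ∈ TSet f x N) :
    ∀ (s : S) (N : ℕ), |f s * (N : ℝ) - (nOcc x s N : ℝ)| ≤ 1 := by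
  have hmono : ∀ (s : S) (N : ℕ), ⌊f s * (N : ℝ)⌋ ≤ ⌊f s * ((N : ℝ) + 1)⌋ := by
    intro s N
    apply Int.floor_le_floor
    nlinarith [(hf0 s).le]
  -- lower bound
  have hlow : ∀ (N : ℕ) (s : S), ⌊f s * (N : ℝ)⌋ ≤ (nOcc x s N : ℤ) := by
    intro N s
    cases N with
    | zero => simp [nOcc]
    | succ N =>
      obtain ⟨-, hb⟩ := hx N
      have h1 := hb ((N : ℤ) + 1) (by omega)
      have hterm : max 0 (⌊f s * (((N : ℤ) + 1 : ℤ) : ℝ)⌋ - (nOcc x s N : ℤ) -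
          if s = x N then 1 else 0) ≤ 0 := by
        calc _ ≤ ∑ s', max 0 (⌊f s' * (((N : ℤ) + 1 : ℤ) : ℝ)⌋ - (nOcc x s' N : ℤ) -
              if s' = x N then 1 else 0) :=
            Finset.single_le_sum (fun s' _ => le_max_left 0 _) (Finset.mem_univ s)
          _ ≤ 0 := by omega
      have h2 : ⌊f s * (((N : ℤ) + 1 : ℤ) : ℝ)⌋ - (nOcc x s N : ℤ) -
          (if s = x N then 1 else 0) ≤ 0 := le_trans (le_max_right 0 _) hterm
      have h3 : nOcc x s (N + 1) = nOcc x s N + if x N = s then 1 else 0 := nOcc_succ x s N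
      push_cast at h2 ⊢
      by_cases h : x N = s
      · simp [h, eq_comm] at h2 h3
        push_cast
        omega
      · rw [if_neg (fun e => h e.symm)] at h2
        rw [if_neg h] at h3
        push_cast
        omega
  -- upper bound
  have hup : ∀ (N : ℕ) (s : S), (nOcc x s N : ℤ) ≤ ⌊f s * (N : ℝ)⌋ + 1 := by
    intro N
    induction N with
    | zero => intro s; simp [nOcc]
    | succ N ih =>
      intro s
      have h3 : nOcc x s (N + 1) = nOcc x s N + if x N = s then 1 else 0 := nOcc_succ x s N
      have hc : ((N : ℝ) + 1) = ((N + 1 : ℕ) : ℝ) := by push_cast; ring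
      by_cases h : x N = s
      · subst h
        obtain ⟨ha, -⟩ := hx N
        rw [hc] at ha
        have := ih (x N)
        have := hmono (x N) N
        rw [hc] at this
        simp at h3
        rcases ha with ha | ha <;> omega
      · simp [h] at h3
        have := ih s
        have := hmono s N
        rw [hc] at this
        omega
  intro s N
  have h1 := hlow N s
  have h2 := hup N s
  have hfl : (⌊f s * (N : ℝ)⌋ : ℝ) ≤ f s * N := Int.floor_le _
  have hfu : f s * N < (⌊f s * (N : ℝ)⌋ : ℝ) + 1 := Int.lt_floor_add_one _
  rw [abs_le]
  constructor
  · have : (nOcc x s N : ℝ) ≤ ((⌊f s * (N : ℝ)⌋ : ℤ) : ℝ) + 1 := by exact_mod_cast h2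
    linarith
  · have : ((⌊f s * (N : ℝ)⌋ : ℤ) : ℝ) ≤ (nOcc x s N : ℝ) := by exact_mod_cast h1
    linarith
end

section
/- Let x : ℕ → S be a sequence such that x_N ∈ T(N) for every N ∈ ℕ. Then for every s ∈ S and every N ∈ ℕ, n(s,N) ∈ {⌊f(s)·N⌋, ⌊f(s)·N⌋ + 1}. -/
open Finset

theorem stmt_1 {S : Type*} [Fintype S] [DecidableEq S] [Nonempty S]
    (f : S → ℝ) (hf0 : ∀ s, 0 < f s) (hf1 : ∀ s, f s ≤ 1)
    (hsum : ∑ s, f s = 1)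
    (x : ℕ → S) (hx : ∀ N : ℕ, x N ∈ TSet f x N) :
    ∀ (s : S) (N : ℕ),
      (nOcc x s N : ℤ) = ⌊f s * (N : ℝ)⌋ ∨ (nOcc x s N : ℤ) = ⌊f s * (N : ℝ)⌋ + 1 := by
  intro s N
  induction N generalizing s with
  | zero => left; simp [nOcc]
  | succ N ih =>
    obtain ⟨ha, hb⟩ := hx N
    have hM := hb ((N : ℤ) + 1) (by omega)
    have hcast : (((N : ℤ) + 1 : ℤ) : ℝ) = (N : ℝ) + 1 := by push_cast; ring
    rw [hcast] at hM
    simp only [add_sub_cancel_left] at hM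
    have hnonneg : ∀ u ∈ Finset.univ,
        (0 : ℤ) ≤ max 0 (⌊f u * ((N : ℝ) + 1)⌋ - (nOcc x u N : ℤ) - if u = x N then 1 else 0) :=
      fun u _ => le_max_left _ _
    have hsum0 := le_antisymm (by linarith [hM]) (Finset.sum_nonneg hnonneg)
    have hzero := (Finset.sum_eq_zero_iff_of_nonneg hnonneg).mp hsum0 s (Finset.mem_univ s)
    rw [max_eq_left_iff] at hzero
    have hterm : ⌊f s * ((N : ℝ) + 1)⌋ - (nOcc x s N : ℤ) - (if s = x N then 1 else 0) ≤ 0 :=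
      hzero
    have hmono : ⌊f s * (N : ℝ)⌋ ≤ ⌊f s * ((N : ℝ) + 1)⌋ := by
      apply Int.floor_le_floor
      nlinarith [(hf0 s).le]
    have hstep : ⌊f s * ((N : ℝ) + 1)⌋ ≤ ⌊f s * (N : ℝ)⌋ + 1 := by
      have : ⌊f s * ((N : ℝ) + 1)⌋ ≤ ⌊f s * (N : ℝ) + 1⌋ := by
        apply Int.floor_le_floor; nlinarith [hf1 s]
      simpa using this
    have hocc := nOcc_succ x s N
    have hcast2 : ((N + 1 : ℕ) : ℝ) = (N : ℝ) + 1 := by push_cast; ring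
    rw [hcast2]
    by_cases hst : x N = s
    · subst hst
      simp only [if_pos rfl] at hterm
      simp at hocc
      have hle : (nOcc x (x N) N : ℤ) ≤ ⌊f (x N) * ((N : ℝ) + 1)⌋ := by
        rcases ha with h | h
        · omega
        · rcases ih (x N) with h2 | h2 <;> omega
      omega
    · have hne : ¬ (s = x N) := fun h => hst h.symm
      simp only [if_neg hne] at hterm
      simp only [if_neg hst] at hocc
      rcases ih s with h2 | h2 <;> omega
end

section
/- Let x : ℕ → S be a sequence such that x_N ∈ T(N) for every N ∈ ℕ. Then for all integers M ≥ N ≥ 0, Σ_{s∈S} max{0, ⌊f(s)·M⌋ − n(s,N)} ≤ M − N. -/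
open Finset

theorem stmt_2 {S : Type*} [Fintype S] [DecidableEq S] [Nonempty S]
    (f : S → ℝ) (hf0 : ∀ s, 0 < f s) (hf1 : ∀ s, f s ≤ 1)
    (hsum : ∑ s, f s = 1)
    (x : ℕ → S) (hx : ∀ N : ℕ, x N ∈ TSet f x N) :
    ∀ (N : ℕ) (M : ℤ), (N : ℤ) ≤ M →
      ∑ s, max 0 (⌊f s * (M : ℝ)⌋ - (nOcc x s N : ℤ)) ≤ M - (N : ℤ) := by
  intro N M hNM
  cases N with
  | zero =>
    simp only [Nat.cast_zero, sub_zero]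
    have h1 : ∀ s : S, max 0 (⌊f s * (M : ℝ)⌋ - (nOcc x s 0 : ℤ)) = ⌊f s * (M : ℝ)⌋ := by
      intro s
      have : (0 : ℝ) ≤ f s * (M : ℝ) := by
        have : (0 : ℝ) ≤ (M : ℝ) := by exact_mod_cast hNM
        exact mul_nonneg (hf0 s).le this
      simp [nOcc, max_eq_right, Int.floor_nonneg.2 this]
    rw [Finset.sum_congr rfl fun s _ => h1 s]
    have : (∑ s, ⌊f s * (M : ℝ)⌋ : ℝ) ≤ ∑ s, f s * (M : ℝ) :=
      Finset.sum_le_sum fun s _ => Int.floor_le _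
    rw [← Finset.sum_mul, hsum, one_mul] at this
    exact_mod_cast this
  | succ k =>
    have hk := (hx k).2 M (by push_cast at hNM ⊢; linarith)
    calc ∑ s, max 0 (⌊f s * (M : ℝ)⌋ - (nOcc x s (k + 1) : ℤ))
        = ∑ s, max 0 (⌊f s * (M : ℝ)⌋ - (nOcc x s k : ℤ) - if s = x k then 1 else 0) := by
          apply Finset.sum_congr rfl
          intro s _
          rw [nOcc_succ]
          push_cast
          by_cases h : s = x k <;> simp [h, eq_comm (a := x k)] <;> ring
      _ ≤ M - (k : ℤ) - 1 := hk
      _ = M - ((k : ℤ) + 1) := by ring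
      _ = M - ((k + 1 : ℕ) : ℤ) := by push_cast; ring
end

section
/- Fix N ∈ ℕ and a finite sequence x_0, …, x_{N−1} ∈ S such that (i) n(s,N) ∈ {⌊f(s)·N⌋, ⌊f(s)·N⌋ + 1} for every s ∈ S, and (ii) Σ_{s∈S} max{0, ⌊f(s)·M⌋ − n(s,N)} ≤ M − N for every integer M ≥ N. Then the set T(N) is nonempty. -/
open Finset

theorem stmt_3 {S : Type*} [Fintype S] [DecidableEq S] [Nonempty S]
    (f : S → ℝ) (hf0 : ∀ s, 0 < f s) (hf1 : ∀ s, f s ≤ 1)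
    (hsum : ∑ s, f s = 1)
    (N : ℕ) (x : ℕ → S)
    (h1 : ∀ s : S,
      (nOcc x s N : ℤ) = ⌊f s * (N : ℝ)⌋ ∨ (nOcc x s N : ℤ) = ⌊f s * (N : ℝ)⌋ + 1)
    (h2 : ∀ M : ℤ, (N : ℤ) ≤ M →
      ∑ s, max 0 (⌊f s * (M : ℝ)⌋ - (nOcc x s N : ℤ)) ≤ M - (N : ℤ)) :
    (TSet f x N).Nonempty := by
  classical
  -- total number of occurrences is N
  have hsumn : ∑ s, (nOcc x s N : ℤ) = (N : ℤ) := by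
    have h : ∑ s, nOcc x s N = N := by
      have hcf := Finset.card_eq_sum_card_fiberwise
        (s := Finset.range N) (t := Finset.univ) (f := x) (fun k _ => Finset.mem_univ (x k))
      simpa [nOcc, Finset.card_range] using hcf.symm
    calc ∑ s, (nOcc x s N : ℤ) = ((∑ s, nOcc x s N : ℕ) : ℤ) := by push_cast; rfl
      _ = N := by rw [h]
  -- floor monotonicity
  have hmono : ∀ s : S, ∀ y z : ℝ, y ≤ z → ⌊f s * y⌋ ≤ ⌊f s * z⌋ := fun s y z h =>
    Int.floor_le_floor (mul_le_mul_of_nonneg_left h (hf0 s).le)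
  have hfloorhi : ∀ s : S, ⌊f s * ((N : ℝ) + 1)⌋ ≤ ⌊f s * (N : ℝ)⌋ + 1 := by
    intro s
    have h : f s * ((N : ℝ) + 1) ≤ f s * (N : ℝ) + 1 := by nlinarith [hf1 s, hf0 s]
    calc ⌊f s * ((N : ℝ) + 1)⌋ ≤ ⌊f s * (N : ℝ) + 1⌋ := Int.floor_le_floor h
      _ = ⌊f s * (N : ℝ)⌋ + 1 := Int.floor_add_one _
  have hfloorlo : ∀ s : S, ⌊f s * (N : ℝ)⌋ ≤ ⌊f s * ((N : ℝ) + 1)⌋ := fun s =>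
    hmono s _ _ (by linarith)
  by_cases hc : ∃ M : ℤ, (N : ℤ) < M ∧
      ∑ s, max 0 (⌊f s * (M : ℝ)⌋ - (nOcc x s N : ℤ)) = M - (N : ℤ)
  · -- Case 2: some tight M exists; take the minimal one
    obtain ⟨M₁, hM₁N, hM₁eq⟩ := hc
    have hQ : ∃ k : ℕ,
        ∑ s, max 0 (⌊f s * (((N : ℤ) + 1 + k : ℤ) : ℝ)⌋ - (nOcc x s N : ℤ))
          = (N : ℤ) + 1 + k - N := by
      refine ⟨(M₁ - N - 1).toNat, ?_⟩
      have hM : (N : ℤ) + 1 + ((M₁ - N - 1).toNat : ℤ) = M₁ := by omega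
      rw [hM]; exact hM₁eq
    set k₀ := Nat.find hQ with hk₀
    set M₀ : ℤ := (N : ℤ) + 1 + k₀ with hM₀def
    have hM₀N : (N : ℤ) < M₀ := by omega
    have hDM₀ : ∑ s, max 0 (⌊f s * ((M₀ : ℤ) : ℝ)⌋ - (nOcc x s N : ℤ)) = M₀ - N :=
      Nat.find_spec hQ
    have hmin : ∀ M : ℤ, (N : ℤ) < M → M < M₀ →
        ∑ s, max 0 (⌊f s * (M : ℝ)⌋ - (nOcc x s N : ℤ)) ≤ M - (N : ℤ) - 1 := by
      intro M hNM hMM₀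
      have hne : ∑ s, max 0 (⌊f s * (M : ℝ)⌋ - (nOcc x s N : ℤ)) ≠ M - (N : ℤ) := by
        intro he
        have hk2 : (M - N - 1).toNat < k₀ := by omega
        apply Nat.find_min hQ hk2
        have hM : (N : ℤ) + 1 + ((M - N - 1).toNat : ℤ) = M := by omega
        rw [hM]; exact he
      have := h2 M hNM.le
      omega
    -- the set A of symbols whose floor has overtaken the count
    set A : Finset S := Finset.univ.filter
      (fun s => (nOcc x s N : ℤ) < ⌊f s * ((M₀ : ℤ) : ℝ)⌋) with hAdef
    have hAmem : ∀ s, s ∈ A ↔ (nOcc x s N : ℤ) < ⌊f s * ((M₀ : ℤ) : ℝ)⌋ := by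
      intro s; simp [hAdef]
    have hAne : A.Nonempty := by
      by_contra hemp
      rw [Finset.not_nonempty_iff_eq_empty, Finset.filter_eq_empty_iff] at hemp
      have hz : ∑ s, max 0 (⌊f s * ((M₀ : ℤ) : ℝ)⌋ - (nOcc x s N : ℤ)) = 0 :=
        Finset.sum_eq_zero fun s _ => max_eq_left
          (by have := hemp (Finset.mem_univ s); omega)
      omega
    have hsumA : ∑ s ∈ A, (⌊f s * ((M₀ : ℤ) : ℝ)⌋ - (nOcc x s N : ℤ)) = M₀ - N := by
      have hsplit : ∑ s, max 0 (⌊f s * ((M₀ : ℤ) : ℝ)⌋ - (nOcc x s N : ℤ))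
          = ∑ s ∈ A, (⌊f s * ((M₀ : ℤ) : ℝ)⌋ - (nOcc x s N : ℤ)) := by
        rw [← Finset.sum_filter_add_sum_filter_not Finset.univ
          (fun s => (nOcc x s N : ℤ) < ⌊f s * ((M₀ : ℤ) : ℝ)⌋)]
        rw [Finset.sum_congr rfl (fun s hs => max_eq_right (by
          have := (Finset.mem_filter.mp hs).2; omega)),
          Finset.sum_eq_zero (fun s hs => max_eq_left (by
            have := (Finset.mem_filter.mp hs).2; omega)), add_zero]
      omega
    -- find a good t in A
    have hA : ∃ t, (nOcc x t N : ℤ) < ⌊f t * ((M₀ : ℤ) : ℝ)⌋ ∧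
        ((nOcc x t N : ℤ) = ⌊f t * (N : ℝ)⌋ ∨
          ⌊f t * ((N : ℝ) + 1)⌋ = ⌊f t * (N : ℝ)⌋ + 1) := by
      by_contra hcon
      push_neg at hcon
      have hbad : ∀ s, (nOcc x s N : ℤ) < ⌊f s * ((M₀ : ℤ) : ℝ)⌋ →
          ⌊f s * ((N : ℝ) + 1)⌋ = (nOcc x s N : ℤ) - 1 := by
        intro s hs
        obtain ⟨h3, h4⟩ := hcon s hs
        have e1 : (nOcc x s N : ℤ) = ⌊f s * (N : ℝ)⌋ + 1 := (h1 s).resolve_left h3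
        have e2 := hfloorhi s
        have e3 := hfloorlo s
        omega
      -- M₀ ≥ N + 2
      obtain ⟨s₀, hs₀⟩ := id hAne
      have hs₀' := (hAmem s₀).mp hs₀
      have hlt : ((N : ℤ) + 1) < M₀ := by
        by_contra hle
        push_neg at hle
        have hm := hmono s₀ ((M₀ : ℤ) : ℝ) ((N : ℝ) + 1) (by push_cast; exact_mod_cast
          (by exact_mod_cast hle : (M₀ : ℝ) ≤ (N : ℝ) + 1))
        have := hbad s₀ hs₀'
        omega
      -- real inequalities
      set P : ℤ := ∑ s ∈ A, (nOcc x s N : ℤ) with hPdef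
      have hP0 : (0 : ℤ) ≤ P := Finset.sum_nonneg fun s _ => Int.ofNat_nonneg _
      have hPN : P ≤ (N : ℤ) := by
        rw [← hsumn]
        exact Finset.sum_le_sum_of_subset_of_nonneg (Finset.subset_univ A)
          (fun s _ _ => Int.ofNat_nonneg _)
      have hfloorsum : ∑ s ∈ A, ⌊f s * ((M₀ : ℤ) : ℝ)⌋ = P + (M₀ - N) := by
        have := hsumA
        rw [Finset.sum_sub_distrib] at this
        omega
      have key1 : (P : ℝ) + ((M₀ : ℝ) - (N : ℝ)) ≤ (∑ s ∈ A, f s) * (M₀ : ℝ) := by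
        have step : ((∑ s ∈ A, ⌊f s * ((M₀ : ℤ) : ℝ)⌋ : ℤ) : ℝ)
            ≤ ∑ s ∈ A, f s * ((M₀ : ℤ) : ℝ) := by
          push_cast
          exact Finset.sum_le_sum fun s _ => Int.floor_le _
        rw [hfloorsum] at step
        push_cast at step
        rw [← Finset.sum_mul] at step
        push_cast
        linarith
      have key2 : (∑ s ∈ A, f s) * ((N : ℝ) + 1) < (P : ℝ) := by
        have step : ∑ s ∈ A, f s * ((N : ℝ) + 1) < ∑ s ∈ A, ((nOcc x s N : ℤ) : ℝ) := by
          apply Finset.sum_lt_sum_of_nonempty hAne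
          intro s hs
          have hb := hbad s ((hAmem s).mp hs)
          have hlt2 := Int.lt_floor_add_one (f s * ((N : ℝ) + 1))
          rw [hb] at hlt2
          push_cast at hlt2 ⊢
          linarith
        rw [← Finset.sum_mul] at step
        calc (∑ s ∈ A, f s) * ((N : ℝ) + 1) < ∑ s ∈ A, ((nOcc x s N : ℤ) : ℝ) := step
          _ = (P : ℝ) := by rw [hPdef]; push_cast; rfl
      -- contradiction
      have hM₀r : (N : ℝ) + 2 ≤ (M₀ : ℝ) := by exact_mod_cast (by omega : (N : ℤ) + 2 ≤ M₀)
      have hPNr : (P : ℝ) ≤ (N : ℝ) := by exact_mod_cast hPN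
      have hP0r : (0 : ℝ) ≤ (P : ℝ) := by exact_mod_cast hP0
      have hNr : (0 : ℝ) ≤ (N : ℝ) := Nat.cast_nonneg N
      have hM₀pos : (0 : ℝ) < (M₀ : ℝ) := by linarith
      nlinarith [mul_lt_mul_of_pos_right key2 hM₀pos,
        mul_le_mul_of_nonneg_right key1 (by linarith : (0 : ℝ) ≤ (N : ℝ) + 1),
        mul_le_mul_of_nonneg_right hPNr (by linarith : (0 : ℝ) ≤ (M₀ : ℝ) - (N : ℝ))]
    obtain ⟨t, htA, hta⟩ := hA
    refine ⟨t, hta, ?_⟩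
    intro M hM
    by_cases hcase : M < M₀
    · have hle := hmin M hM hcase
      refine le_trans (Finset.sum_le_sum fun s _ => ?_) hle
      have hif : (0 : ℤ) ≤ (if s = t then 1 else 0) := by split <;> norm_num
      exact max_le_max le_rfl (by linarith)
    · push_neg at hcase
      have hfl : (nOcc x t N : ℤ) + 1 ≤ ⌊f t * (M : ℝ)⌋ := by
        have := hmono t ((M₀ : ℤ) : ℝ) ((M : ℤ) : ℝ) (by exact_mod_cast hcase)
        omega
      have heq : ∀ s : S, max 0 (⌊f s * (M : ℝ)⌋ - (nOcc x s N : ℤ) - if s = t then 1 else 0)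
          = max 0 (⌊f s * (M : ℝ)⌋ - (nOcc x s N : ℤ)) - (if s = t then 1 else 0) := by
        intro s
        split_ifs with h
        · subst h
          rw [max_eq_right (by omega), max_eq_right (by omega)]
        · simp
      rw [Finset.sum_congr rfl (fun s _ => heq s), Finset.sum_sub_distrib]
      simp only [Finset.sum_ite_eq', Finset.mem_univ, if_true]
      have := h2 M hM.le
      omega
  · -- Case 1: never tight
    push_neg at hc
    have hstrict : ∀ M : ℤ, (N : ℤ) < M →
        ∑ s, max 0 (⌊f s * (M : ℝ)⌋ - (nOcc x s N : ℤ)) ≤ M - (N : ℤ) - 1 := by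
      intro M hM
      have := h2 M hM.le
      have := hc M hM
      omega
    -- find t with nOcc = floor
    have hex : ∃ t, (nOcc x t N : ℤ) = ⌊f t * (N : ℝ)⌋ := by
      by_contra h
      push_neg at h
      have hall : ∀ s, (nOcc x s N : ℤ) = ⌊f s * (N : ℝ)⌋ + 1 :=
        fun s => (h1 s).resolve_left (h s)
      have hs1 : ∑ s, (nOcc x s N : ℤ) = ∑ s, (⌊f s * (N : ℝ)⌋ + 1) :=
        Finset.sum_congr rfl fun s _ => hall s
      have hs2 : ((N : ℝ)) < ((∑ s : S, (⌊f s * (N : ℝ)⌋ + 1) : ℤ) : ℝ) := by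
        push_cast
        have hlt : ∀ s : S, f s * (N : ℝ) < (⌊f s * (N : ℝ)⌋ : ℝ) + 1 :=
          fun s => Int.lt_floor_add_one _
        have := Finset.sum_lt_sum_of_nonempty (Finset.univ_nonempty (α := S))
          (fun s _ => hlt s)
        rw [← Finset.sum_mul, hsum, one_mul] at this
        linarith
      rw [← hs1, hsumn] at hs2
      exact absurd hs2 (by push_cast; linarith)
    obtain ⟨t, ht⟩ := hex
    refine ⟨t, Or.inl ht, ?_⟩
    intro M hM
    refine le_trans (Finset.sum_le_sum fun s _ => ?_) (hstrict M hM)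
    have hif : (0 : ℤ) ≤ (if s = t then 1 else 0) := by split <;> norm_num
    exact max_le_max le_rfl (by linarith)
end

section
/- Let N ∈ ℕ and let c : S → ℕ satisfy Σ_{s∈S} c(s) = N and c(s) ∈ {⌊f(s)·N⌋, ⌊f(s)·N⌋ + 1} for every s ∈ S. Suppose M* is an integer with M* > N and Σ_{s∈S} max{0, ⌊f(s)·M*⌋ − c(s)} = M* − N. Then there exists s ∈ S such that ⌊f(s)·M*⌋ ≥ c(s) + 1 and c(s) = ⌊f(s)·N⌋. -/
/-! If no such `s` existed, every term of the sum would satisfy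
`max 0 (⌊f s * M⌋ - c s) < f s * (M - N)`: it is `0` or, when positive, `c s = ⌊f s * N⌋ + 1 > f s * N`.
Summing, `M - N < (∑ s, f s) * (M - N) = M - N`. -/

open Finset

theorem Int.cast_max_zero_floor_sub_lt {α : Type*} [Field α] [LinearOrder α]
    [IsStrictOrderedRing α] [FloorRing α] {a b : α} {c : ℤ} (hab : a < b)
    (hc : c + 1 ≤ ⌊b⌋ → c = ⌊a⌋ + 1) : ((max 0 (⌊b⌋ - c) : ℤ) : α) < b - a := by
  rcases le_or_gt (⌊b⌋ - c) 0 with hle | hpos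
  · rw [max_eq_left hle, Int.cast_zero]
    exact sub_pos.mpr hab
  · rw [max_eq_right hpos.le, hc (by omega)]
    push_cast
    linarith [Int.floor_le b, Int.lt_floor_add_one a]

theorem stmt_5_general {S : Type*} [Fintype S] [Nonempty S]
    (f : S → ℝ) (hf0 : ∀ s, 0 < f s)
    (hsum : ∑ s, f s = 1)
    (N : ℕ) (c : S → ℕ)
    (hrange : ∀ s : S, (c s : ℤ) = ⌊f s * (N : ℝ)⌋ ∨ (c s : ℤ) = ⌊f s * (N : ℝ)⌋ + 1)
    (Mstar : ℤ) (hM : (N : ℤ) < Mstar)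
    (heq : ∑ s, max 0 (⌊f s * (Mstar : ℝ)⌋ - (c s : ℤ)) = Mstar - (N : ℤ)) :
    ∃ s : S, (c s : ℤ) + 1 ≤ ⌊f s * (Mstar : ℝ)⌋ ∧ (c s : ℤ) = ⌊f s * (N : ℝ)⌋ := by
  by_contra! hnone
  have hMN : (N : ℝ) < Mstar := by exact_mod_cast hM
  have hlt : ∀ s, ((max 0 (⌊f s * (Mstar : ℝ)⌋ - (c s : ℤ)) : ℤ) : ℝ)
      < f s * Mstar - f s * N := fun s =>
    Int.cast_max_zero_floor_sub_lt (mul_lt_mul_of_pos_left hMN (hf0 s))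
      fun h => (hrange s).resolve_left (hnone s h)
  have htotal := sum_lt_sum_of_nonempty univ_nonempty fun s _ => hlt s
  rw [← Int.cast_sum, heq, sum_sub_distrib, ← sum_mul, ← sum_mul, hsum] at htotal
  push_cast at htotal
  linarith

theorem stmt_5 {S : Type*} [Fintype S] [DecidableEq S] [Nonempty S]
    (f : S → ℝ) (hf0 : ∀ s, 0 < f s) (hf1 : ∀ s, f s ≤ 1)
    (hsum : ∑ s, f s = 1)
    (N : ℕ) (c : S → ℕ) (hc : ∑ s, c s = N)
    (hrange : ∀ s : S, (c s : ℤ) = ⌊f s * (N : ℝ)⌋ ∨ (c s : ℤ) = ⌊f s * (N : ℝ)⌋ + 1)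
    (Mstar : ℤ) (hM : (N : ℤ) < Mstar)
    (heq : ∑ s, max 0 (⌊f s * (Mstar : ℝ)⌋ - (c s : ℤ)) = Mstar - (N : ℤ)) :
    ∃ s : S, (c s : ℤ) + 1 ≤ ⌊f s * (Mstar : ℝ)⌋ ∧ (c s : ℤ) = ⌊f s * (N : ℝ)⌋ :=
  stmt_5_general f hf0 hsum N c hrange Mstar hM heq
end

section
/- Fix N ∈ ℕ and a finite sequence x_0, …, x_{N−1} ∈ S such that (i) n(s,N) ∈ {⌊f(s)·N⌋, ⌊f(s)·N⌋ + 1} for every s ∈ S, and (ii) Σ_{s∈S} max{0, ⌊f(s)·M⌋ − n(s,N)} ≤ M − N for every integer M ≥ N. Let E = {M ∈ ℤ : M > N and Σ_{s∈S} max{0, ⌊f(s)·M⌋ − n(s,N)} = M − N}. Suppose t ∈ S satisfies: n(t,N) = ⌊f(t)·N⌋ or ⌊f(t)·(N+1)⌋ = ⌊f(t)·N⌋ + 1; and, in case E is nonempty with minimum M_N, also ⌊f(t)·M_N⌋ ≥ n(t,N) + 1. Then t ∈ T(N). -/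
/-
Removing one occurrence of `t` lowers the total deficit `Σ_s max{0, ⌊f(s)M⌋ − n(s,N)}` by one
exactly when `t` itself is in deficit at `M`, and never raises it. So the inequality defining
`T(N)` can only fail at an `M` where hypothesis (ii) is an equality, i.e. `M ∈ E`. There `M`
lies above the minimum `M_N` of `E`, and `⌊f(t)·M⌋ ≥ ⌊f(t)·M_N⌋ ≥ n(t,N) + 1` because `f(t) > 0`,
so `t` is in deficit at `M` and the total drops from `M − N` to `M − N − 1`.
-/

open Finset

section PositivePart

variable {ι : Type*} [DecidableEq ι] (u : Finset ι) (a : ι → ℤ) (t : ι)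

theorem sum_max_zero_sub_ite_le :
    ∑ s ∈ u, max 0 (a s - if s = t then 1 else 0) ≤ ∑ s ∈ u, max 0 (a s) :=
  sum_le_sum fun s _ => max_le_max le_rfl (by split_ifs <;> omega)

theorem sum_max_zero_sub_ite_eq (ht : t ∈ u) (hat : 1 ≤ a t) :
    ∑ s ∈ u, max 0 (a s - if s = t then 1 else 0) = ∑ s ∈ u, max 0 (a s) - 1 := by
  have hterm : ∀ s, max 0 (a s - if s = t then 1 else 0) =
      max 0 (a s) - if s = t then 1 else 0 := by
    intro s
    split_ifs with hs
    · subst hs; omega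
    · simp
  rw [sum_congr rfl fun s _ => hterm s, sum_sub_distrib, sum_ite_eq' u t, if_pos ht]

end PositivePart

theorem stmt_6_general {S : Type*} [Fintype S] [DecidableEq S]
    (f : S → ℝ) (hf0 : ∀ s, 0 < f s)
    (N : ℕ) (x : ℕ → S)
    (h2 : ∀ M : ℤ, (N : ℤ) ≤ M →
      ∑ s, max 0 (⌊f s * (M : ℝ)⌋ - (nOcc x s N : ℤ)) ≤ M - (N : ℤ))
    (t : S)
    (ht1 : (nOcc x t N : ℤ) = ⌊f t * (N : ℝ)⌋ ∨ ⌊f t * ((N : ℝ) + 1)⌋ = ⌊f t * (N : ℝ)⌋ + 1)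
    (ht2 : ∀ MN : ℤ,
      IsLeast {M : ℤ | (N : ℤ) < M ∧
          ∑ s, max 0 (⌊f s * (M : ℝ)⌋ - (nOcc x s N : ℤ)) = M - (N : ℤ)} MN →
      (nOcc x t N : ℤ) + 1 ≤ ⌊f t * (MN : ℝ)⌋) :
    t ∈ TSet f x N := by
  refine ⟨ht1, fun M hM => ?_⟩
  set deficit : S → ℤ := fun s => ⌊f s * (M : ℝ)⌋ - (nOcc x s N : ℤ)
  rcases (h2 M hM.le).lt_or_eq with hlt | heq
  · linarith [sum_max_zero_sub_ite_le univ deficit t]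
  · obtain ⟨MN, hMN⟩ := Int.exists_least_of_bdd (P := fun M' => (N : ℤ) < M' ∧
      ∑ s, max 0 (⌊f s * (M' : ℝ)⌋ - (nOcc x s N : ℤ)) = M' - (N : ℤ))
      ⟨N, fun _ hz => hz.1.le⟩ ⟨M, hM, heq⟩
    have hMN_le : (MN : ℝ) ≤ M := by exact_mod_cast hMN.2 M ⟨hM, heq⟩
    have ht_deficit : 1 ≤ deficit t := by
      have := (ht2 MN hMN).trans
        (Int.floor_le_floor (mul_le_mul_of_nonneg_left hMN_le (hf0 t).le))
      simp only [deficit]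
      omega
    rw [sum_max_zero_sub_ite_eq univ deficit t (mem_univ t) ht_deficit, heq]

theorem stmt_6 {S : Type*} [Fintype S] [DecidableEq S] [Nonempty S]
    (f : S → ℝ) (hf0 : ∀ s, 0 < f s) (hf1 : ∀ s, f s ≤ 1)
    (hsum : ∑ s, f s = 1)
    (N : ℕ) (x : ℕ → S)
    (h1 : ∀ s : S,
      (nOcc x s N : ℤ) = ⌊f s * (N : ℝ)⌋ ∨ (nOcc x s N : ℤ) = ⌊f s * (N : ℝ)⌋ + 1)
    (h2 : ∀ M : ℤ, (N : ℤ) ≤ M →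
      ∑ s, max 0 (⌊f s * (M : ℝ)⌋ - (nOcc x s N : ℤ)) ≤ M - (N : ℤ))
    (t : S)
    (ht1 : (nOcc x t N : ℤ) = ⌊f t * (N : ℝ)⌋ ∨ ⌊f t * ((N : ℝ) + 1)⌋ = ⌊f t * (N : ℝ)⌋ + 1)
    (ht2 : ∀ MN : ℤ,
      IsLeast {M : ℤ | (N : ℤ) < M ∧
          ∑ s, max 0 (⌊f s * (M : ℝ)⌋ - (nOcc x s N : ℤ)) = M - (N : ℤ)} MN →
      (nOcc x t N : ℤ) + 1 ≤ ⌊f t * (MN : ℝ)⌋) :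
    t ∈ TSet f x N :=
  stmt_6_general f hf0 N x h2 t ht1 ht2
end

section
/- Let Δ ≥ 0 be a real number and let x : ℕ → S satisfy |f(s)·N − n(s,N)| ≤ Δ for all s ∈ S and all N ∈ ℕ. If s ∈ S, ℓ ∈ ℕ, and m ∈ ℕ are such that x_m = s and n(s, m+1) = ℓ + 1 (i.e. m is the index of the (ℓ+1)-th occurrence of s, so the asymmetric-numeral-system encoding satisfies C(s,ℓ) = m), then |m − ((ℓ+1)/f(s) − 1)| ≤ Δ/f(s). -/
open Finset

theorem abs_sub_div_sub_one_le_of_abs_mul_add_one_sub_le {a b t Δ : ℝ} (ha : 0 < a)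
    (h : |a * (t + 1) - b| ≤ Δ) : |t - (b / a - 1)| ≤ Δ / a := by
  have hdiv : t - (b / a - 1) = (a * (t + 1) - b) / a := by field_simp; ring
  rw [hdiv, abs_div, abs_of_pos ha]
  gcongr

theorem stmt_9_general {S : Type*} [DecidableEq S]
    (f : S → ℝ) (hf0 : ∀ s, 0 < f s)
    (Δ : ℝ)
    (x : ℕ → S)
    (hdisc : ∀ (s : S) (N : ℕ), |f s * (N : ℝ) - (nOcc x s N : ℝ)| ≤ Δ)
    (s : S) (ℓ m : ℕ)
    (hocc : nOcc x s (m + 1) = ℓ + 1) :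
    |(m : ℝ) - (((ℓ : ℝ) + 1) / f s - 1)| ≤ Δ / f s := by
  have h := hdisc s (m + 1)
  rw [hocc] at h
  push_cast at h
  exact abs_sub_div_sub_one_le_of_abs_mul_add_one_sub_le (hf0 s) h

theorem stmt_9 {S : Type*} [Fintype S] [DecidableEq S] [Nonempty S]
    (f : S → ℝ) (hf0 : ∀ s, 0 < f s) (hf1 : ∀ s, f s ≤ 1)
    (hsum : ∑ s, f s = 1)
    (Δ : ℝ) (hΔ : 0 ≤ Δ)
    (x : ℕ → S)
    (hdisc : ∀ (s : S) (N : ℕ), |f s * (N : ℝ) - (nOcc x s N : ℝ)| ≤ Δ)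
    (s : S) (ℓ m : ℕ)
    (hx : x m = s) (hocc : nOcc x s (m + 1) = ℓ + 1) :
    |(m : ℝ) - (((ℓ : ℝ) + 1) / f s - 1)| ≤ Δ / f s :=
  stmt_9_general f hf0 Δ x hdisc s ℓ m hocc
end

section
/- Let x : ℕ → S satisfy |f(s)·N − n(s,N)| ≤ 1 for all s ∈ S and all N ∈ ℕ, and let N ∈ ℕ satisfy N·f(s) ≥ 2 for all s ∈ S. Define q_N(s) = n(s,N)/N (note q_N(s) > 0 under these hypotheses). Then the Kullback–Leibler divergence of q_N relative to f satisfies Σ_{s∈S} f(s)·ln(f(s)/q_N(s)) ≤ (1/(2N²))·Σ_{s∈S} 1/f(s) + (1/N³)·Σ_{s∈S} 1/f(s)². -/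
/-!
Write `n(s,N) = N f(s) (1 + δ_s)`. The discrepancy bound and `N f(s) ≥ 2` give
`|δ_s| ≤ 1/(N f(s)) ≤ 1/2`, and on that range `-log (1 + δ) ≤ -δ + δ²/2 + |δ|³`.
Weighted by `f(s)` and summed over `s`, the linear terms cancel because both `f` and `q_N`
are probability vectors, while the quadratic and cubic terms give the two error sums.
-/

open Finset

theorem sum_nOcc {S : Type*} [Fintype S] [DecidableEq S] (x : ℕ → S) (N : ℕ) :
    ∑ s, nOcc x s N = N := by
  simpa [nOcc] using (card_eq_sum_card_fiberwise (s := range N) (t := univ)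
    (fun k _ => mem_univ (x k))).symm

theorem Real.neg_log_one_add_le {δ : ℝ} (h : |δ| ≤ 1 / 2) :
    -Real.log (1 + δ) ≤ -δ + δ ^ 2 / 2 + |δ| ^ 3 := by
  have taylor := (abs_le.mp (Real.abs_log_sub_add_sum_range_le
    (show |-δ| < 1 by rw [abs_neg]; linarith) 4)).1
  simp only [sum_range_succ, sum_range_zero, abs_neg, sub_neg_eq_add] at taylor
  set a := |δ|
  have ha : 0 ≤ a := abs_nonneg δ
  have rem : a ^ 5 / (1 - a) ≤ 2 * a ^ 5 := by
    rw [div_le_iff₀ (by linarith)]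
    nlinarith [pow_nonneg ha 5]
  have cube : -a ^ 3 ≤ δ ^ 3 := abs_pow δ 3 ▸ neg_abs_le (δ ^ 3)
  have quartic : δ ^ 4 = a ^ 4 := by rw [← abs_pow, abs_of_nonneg (by positivity)]
  norm_num at taylor
  -- `-δ³/3 + δ⁴/4 + 2a⁵ ≤ a³ (1/3 + 1/8 + 1/2)` because `a ≤ 1/2`
  nlinarith [pow_nonneg ha 3, pow_nonneg ha 4]

theorem mul_log_div_freq_le {f n N : ℝ} (hf : 0 < f) (hN : 2 ≤ N * f)
    (hdisc : |f * N - n| ≤ 1) :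
    f * Real.log (f / (n / N)) ≤
      (f - n / N) + 1 / (2 * N ^ 2) * (1 / f) + 1 / N ^ 3 * (1 / f ^ 2) := by
  obtain ⟨hlo, hhi⟩ := abs_le.mp hdisc
  have ht : 0 < f * N := by linarith
  have hN0 : 0 < N := pos_of_mul_pos_right ht hf.le
  set δ := (n - f * N) / (f * N)
  have hδ_mul : f * N * δ = n - f * N := mul_div_cancel₀ _ ht.ne'
  have hδ : |δ| ≤ 1 / (f * N) := by
    rw [abs_div, abs_of_pos ht, abs_sub_comm]
    gcongr
  have hδ_half : |δ| ≤ 1 / 2 := hδ.trans (by gcongr; linarith)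
  have hratio : f / (n / N) = (1 + δ)⁻¹ := by
    rw [show 1 + δ = n / (f * N) from eq_div_of_mul_eq ht.ne' (by linarith)]
    field_simp
  have hlin : f * -δ = f - n / N := by field_simp; linarith
  have hsq : f * (δ ^ 2 / 2) ≤ 1 / (2 * N ^ 2) * (1 / f) := by
    calc f * (δ ^ 2 / 2) = f * (|δ| ^ 2 / 2) := by rw [sq_abs]
      _ ≤ f * ((1 / (f * N)) ^ 2 / 2) := by gcongr
      _ = 1 / (2 * N ^ 2) * (1 / f) := by field_simp
  have hcube : f * |δ| ^ 3 ≤ 1 / N ^ 3 * (1 / f ^ 2) := by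
    calc f * |δ| ^ 3 ≤ f * (1 / (f * N)) ^ 3 := by gcongr
      _ = 1 / N ^ 3 * (1 / f ^ 2) := by field_simp
  calc f * Real.log (f / (n / N)) = f * -Real.log (1 + δ) := by rw [hratio, Real.log_inv]
    _ ≤ f * (-δ + δ ^ 2 / 2 + |δ| ^ 3) := by gcongr; exact Real.neg_log_one_add_le hδ_half
    _ = f * -δ + f * (δ ^ 2 / 2) + f * |δ| ^ 3 := by ring
    _ ≤ _ := by linarith

theorem stmt_10_general {S : Type*} [Fintype S] [DecidableEq S]
    (f : S → ℝ) (hf0 : ∀ s, 0 < f s)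
    (hsum : ∑ s, f s = 1)
    (x : ℕ → S)
    (hdisc : ∀ (s : S) (N : ℕ), |f s * (N : ℝ) - (nOcc x s N : ℝ)| ≤ 1)
    (N : ℕ) (hN : ∀ s : S, 2 ≤ (N : ℝ) * f s) :
    ∑ s, f s * Real.log (f s / ((nOcc x s N : ℝ) / (N : ℝ)))
      ≤ 1 / (2 * (N : ℝ) ^ 2) * ∑ s, 1 / f s
        + 1 / (N : ℝ) ^ 3 * ∑ s, 1 / f s ^ 2 := by
  obtain ⟨s₀, -, -⟩ := exists_ne_zero_of_sum_ne_zero (hsum ▸ one_ne_zero : ∑ s, f s ≠ 0)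
  have hN0 : (N : ℝ) ≠ 0 := by
    rintro h
    linarith [hN s₀, h ▸ zero_mul (f s₀)]
  have hq_sum : ∑ s, (nOcc x s N : ℝ) / N = 1 := by
    rw [← sum_div, ← Nat.cast_sum, sum_nOcc, div_self hN0]
  calc _ ≤ ∑ s, ((f s - nOcc x s N / N) + 1 / (2 * (N : ℝ) ^ 2) * (1 / f s)
          + 1 / (N : ℝ) ^ 3 * (1 / f s ^ 2)) :=
        sum_le_sum fun s _ => mul_log_div_freq_le (hf0 s) (hN s) (hdisc s N)
    _ = _ := by
      rw [sum_add_distrib, sum_add_distrib, sum_sub_distrib, hsum, hq_sum, ← mul_sum, ← mul_sum]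
      ring

theorem stmt_10 {S : Type*} [Fintype S] [DecidableEq S] [Nonempty S]
    (f : S → ℝ) (hf0 : ∀ s, 0 < f s) (hf1 : ∀ s, f s ≤ 1)
    (hsum : ∑ s, f s = 1)
    (x : ℕ → S)
    (hdisc : ∀ (s : S) (N : ℕ), |f s * (N : ℝ) - (nOcc x s N : ℝ)| ≤ 1)
    (N : ℕ) (hN : ∀ s : S, 2 ≤ (N : ℝ) * f s) :
    ∑ s, f s * Real.log (f s / ((nOcc x s N : ℝ) / (N : ℝ)))
      ≤ 1 / (2 * (N : ℝ) ^ 2) * ∑ s, 1 / f s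
        + 1 / (N : ℝ) ^ 3 * ∑ s, 1 / f s ^ 2 :=
  stmt_10_general f hf0 hsum x hdisc N hN
end

section
/- Let B and M be integers with B ≥ 2 and M ≥ 1, and let I = {M, M+1, …, B·M − 1}. Then for every integer m with 1 ≤ m ≤ M − 1 and every sequence (b_k)_{k≥1} with b_k ∈ {0, 1, …, B−1} for all k, there exists a unique positive integer ℓ such that m·B^ℓ + b_1·B^{ℓ−1} + b_2·B^{ℓ−2} + ⋯ + b_ℓ ∈ I. -/
/-!
Appending the digits one at a time gives states `x₀ = m` and `x_{ℓ+1} = B·x_ℓ + b_{ℓ+1}`, so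
`B·x_ℓ ≤ x_{ℓ+1} ≤ B·x_ℓ + B - 1`. These bounds make `x_{ℓ+1} ∈ [M, BM - 1]` equivalent to
`x_ℓ < M ≤ x_{ℓ+1}`. Since `B ≥ 2` and `m ≥ 1` the states strictly increase to infinity, and they
start below `M`, so they cross the threshold `M` exactly once.
-/

open Finset

/-- The integer whose base-`B` expansion is that of `m` followed by the digits `b 1, …, b ℓ`. -/
def appendDigits (B m : ℤ) (b : ℕ → ℤ) (ℓ : ℕ) : ℤ :=
  m * B ^ ℓ + ∑ k ∈ range ℓ, b (k + 1) * B ^ (ℓ - 1 - k)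

theorem appendDigits_zero (B m : ℤ) (b : ℕ → ℤ) : appendDigits B m b 0 = m := by
  simp [appendDigits]

theorem appendDigits_succ (B m : ℤ) (b : ℕ → ℤ) (ℓ : ℕ) :
    appendDigits B m b (ℓ + 1) = B * appendDigits B m b ℓ + b (ℓ + 1) := by
  have hshift : ∀ k ∈ range ℓ, b (k + 1) * B ^ (ℓ - k) = B * (b (k + 1) * B ^ (ℓ - 1 - k)) := by
    intro k hk
    rw [show ℓ - k = ℓ - 1 - k + 1 by have := mem_range.mp hk; omega]
    ring
  simp only [appendDigits, Nat.add_sub_cancel, sum_range_succ, Nat.sub_self]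
  rw [sum_congr rfl hshift, ← mul_sum]
  ring

theorem le_and_le_mul_sub_one_iff {B M x y : ℤ} (hB : 0 < B) (hlo : B * x ≤ y)
    (hhi : y ≤ B * x + (B - 1)) : (M ≤ y ∧ y ≤ B * M - 1) ↔ (x < M ∧ M ≤ y) := by
  constructor
  · rintro ⟨hMy, hyM⟩
    exact ⟨lt_of_mul_lt_mul_left (by linarith) hB.le, hMy⟩
  · rintro ⟨hxM, hMy⟩
    exact ⟨hMy, by nlinarith⟩

theorem existsUnique_not_and_succ {P : ℕ → Prop} (hP : Monotone P) (h0 : ¬P 0)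
    (h : ∃ n, P n) : ∃! n, ¬P n ∧ P (n + 1) := by
  classical
  obtain ⟨n, hn⟩ : ∃ n, Nat.find h = n + 1 :=
    Nat.exists_eq_add_one_of_ne_zero fun hz => h0 (hz ▸ Nat.find_spec h)
  refine ⟨n, ⟨Nat.find_min h (by omega), hn ▸ Nat.find_spec h⟩, ?_⟩
  have hcross : ∀ i j, ¬P i → P (j + 1) → i ≤ j := fun i j hi hj =>
    Nat.le_of_lt_succ (lt_of_not_ge fun hji => hi (hP hji hj))
  rintro k ⟨hk, hk1⟩
  exact le_antisymm (hcross k n hk (hn ▸ Nat.find_spec h))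
    (hcross n k (Nat.find_min h (by omega)) hk1)

theorem existsUnique_pos_of_existsUnique_succ {Q : ℕ → Prop} (h : ∃! n, Q (n + 1)) :
    ∃! ℓ, 0 < ℓ ∧ Q ℓ := by
  obtain ⟨n, hn, huniq⟩ := h
  refine ⟨n + 1, ⟨n.succ_pos, hn⟩, ?_⟩
  rintro (_ | ℓ) ⟨hpos, hQ⟩
  · exact absurd hpos (lt_irrefl 0)
  · exact congrArg (· + 1) (huniq ℓ hQ)

section Growth

variable {B : ℤ} {x : ℕ → ℤ}

theorem add_le_of_mul_le_succ (hB : 2 ≤ B) (h0 : 1 ≤ x 0) (hx : ∀ n, B * x n ≤ x (n + 1))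
    (n : ℕ) : x 0 + n ≤ x n := by
  induction n with
  | zero => simp
  | succ n ih =>
    push_cast
    nlinarith [hx n]

theorem strictMono_of_mul_le_succ (hB : 2 ≤ B) (h0 : 1 ≤ x 0)
    (hx : ∀ n, B * x n ≤ x (n + 1)) : StrictMono x :=
  strictMono_nat_of_lt_succ fun n => by
    nlinarith [hx n, add_le_of_mul_le_succ hB h0 hx n]

theorem exists_le_of_mul_le_succ (hB : 2 ≤ B) (h0 : 1 ≤ x 0)
    (hx : ∀ n, B * x n ≤ x (n + 1)) (M : ℤ) : ∃ n, M ≤ x n :=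
  ⟨M.toNat, by linarith [add_le_of_mul_le_succ hB h0 hx M.toNat, Int.self_le_toNat M]⟩

end Growth

theorem stmt_14_general (B M : ℤ) (hB : 2 ≤ B) :
    ∀ m : ℤ, 1 ≤ m → m ≤ M - 1 →
      ∀ b : ℕ → ℤ, (∀ k : ℕ, 1 ≤ k → 0 ≤ b k ∧ b k ≤ B - 1) →
        ∃! ℓ : ℕ, 0 < ℓ ∧
          M ≤ m * B ^ ℓ + ∑ k ∈ Finset.range ℓ, b (k + 1) * B ^ (ℓ - 1 - k) ∧
          m * B ^ ℓ + ∑ k ∈ Finset.range ℓ, b (k + 1) * B ^ (ℓ - 1 - k) ≤ B * M - 1 := by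
  intro m hm hmM b hb
  change ∃! ℓ, 0 < ℓ ∧ M ≤ appendDigits B m b ℓ ∧ appendDigits B m b ℓ ≤ B * M - 1
  set x := appendDigits B m b
  have hx0 : x 0 = m := appendDigits_zero B m b
  have hlo : ∀ n, B * x n ≤ x (n + 1) := fun n => by
    simp only [x, appendDigits_succ]; linarith [hb (n + 1) n.succ_pos]
  have hhi : ∀ n, x (n + 1) ≤ B * x n + (B - 1) := fun n => by
    simp only [x, appendDigits_succ]; linarith [hb (n + 1) n.succ_pos]
  have hmono := (strictMono_of_mul_le_succ hB (hx0 ▸ hm) hlo).monotone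
  have hcross := existsUnique_not_and_succ (P := fun n => M ≤ x n)
    (fun i j hij hi => hi.trans (hmono hij)) (by omega)
    (exists_le_of_mul_le_succ hB (hx0 ▸ hm) hlo M)
  refine existsUnique_pos_of_existsUnique_succ ((existsUnique_congr fun n => ?_).mp hcross)
  rw [le_and_le_mul_sub_one_iff (by omega) (hlo n) (hhi n), not_le]

theorem stmt_14 (B M : ℤ) (hB : 2 ≤ B) (hM : 1 ≤ M) :
    ∀ m : ℤ, 1 ≤ m → m ≤ M - 1 →
      ∀ b : ℕ → ℤ, (∀ k : ℕ, 1 ≤ k → 0 ≤ b k ∧ b k ≤ B - 1) →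
        ∃! ℓ : ℕ, 0 < ℓ ∧
          M ≤ m * B ^ ℓ + ∑ k ∈ Finset.range ℓ, b (k + 1) * B ^ (ℓ - 1 - k) ∧
          m * B ^ ℓ + ∑ k ∈ Finset.range ℓ, b (k + 1) * B ^ (ℓ - 1 - k) ≤ B * M - 1 :=
  stmt_14_general B M hB
end

section
/- Let A : ℕ → S be an allocation in which every symbol of S occurs infinitely often. Then the asymmetric-numeral-system decoding inverts the encoding and vice versa: for all s ∈ S and n ∈ ℕ, D(C(s,n)) = (s, n); and for all m ∈ ℕ, writing D(m) = (s, n), one has C(s, n) = m (equivalently, select(A[m], rank(A[m], m)) = m). -/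
/-!
Fix `s` and let `p k` be the predicate `A k = s`. Then `rnk A s m` is `Nat.count p (m + 1)` and,
when `p` holds infinitely often, `sel A s (n + 1)` is the `n`-th index `Nat.nth p n` satisfying `p`,
because `Nat.count p` and `Nat.nth p` form a Galois connection. Both identities are then the facts
that `Nat.count p` and `Nat.nth p` are mutually inverse on the indices where `p` holds.
-/

open Finset

/-- `rnk A s n` is the number of occurrences of `s` among `A 0, …, A n`. -/
def rnk {S : Type*} [DecidableEq S] (A : ℕ → S) (s : S) (n : ℕ) : ℕ :=
  ((Finset.range (n + 1)).filter fun k => A k = s).card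

/-- `sel A s n` is the index of the `n`-th occurrence of `s` in `A`. -/
noncomputable def sel {S : Type*} [DecidableEq S] (A : ℕ → S) (s : S) (n : ℕ) : ℕ :=
  sInf {k : ℕ | n ≤ rnk A s k}

/-- Asymmetric-numeral-system encoding. -/
noncomputable def ansEnc {S : Type*} [DecidableEq S] (A : ℕ → S) (s : S) (n : ℕ) : ℕ :=
  sel A s (n + 1)

/-- Asymmetric-numeral-system decoding. -/
def ansDec {S : Type*} [DecidableEq S] (A : ℕ → S) (m : ℕ) : S × ℕ :=
  (A m, rnk A (A m) m - 1)

section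

variable {S : Type*} [DecidableEq S] (A : ℕ → S)

lemma rnk_eq_count (s : S) (n : ℕ) : rnk A s n = Nat.count (A · = s) (n + 1) := by
  rw [rnk, Nat.count_eq_card_filter_range]

lemma ansEnc_eq_nth {s : S} (hs : (Set.ofPred (A · = s)).Infinite) (n : ℕ) :
    ansEnc A s n = Nat.nth (A · = s) n := by
  have hset : {k | n + 1 ≤ rnk A s k} = Set.Ici (Nat.nth (A · = s) n) := by
    ext k
    simp only [Set.mem_ofPred_eq, Set.mem_Ici, rnk_eq_count, Nat.succ_le_iff,
      Nat.lt_nth_iff_count_lt hs, Nat.lt_succ_iff]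
  rw [ansEnc, sel, hset, csInf_Ici]

lemma ansDec_eq_count (m : ℕ) : ansDec A m = (A m, Nat.count (A · = A m) m) := by
  rw [ansDec, rnk_eq_count, Nat.count_succ_eq_succ_count_iff.mpr (rfl : A m = A m),
    Nat.add_sub_cancel]

end

theorem stmt_15_general {S : Type*} [DecidableEq S]
    (A : ℕ → S) (hA : ∀ (s : S) (N : ℕ), ∃ k : ℕ, N ≤ k ∧ A k = s) :
    (∀ (s : S) (n : ℕ), ansDec A (ansEnc A s n) = (s, n)) ∧
    (∀ m : ℕ, ansEnc A (ansDec A m).1 (ansDec A m).2 = m) := by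
  have hinf : ∀ s, (Set.ofPred (A · = s)).Infinite := fun s =>
    Nat.frequently_atTop_iff_infinite.mp (Filter.frequently_atTop.mpr (hA s))
  refine ⟨fun s n => ?_, fun m => ?_⟩
  · have hnth : A (Nat.nth (A · = s) n) = s := Nat.nth_mem_of_infinite (hinf s) n
    rw [ansEnc_eq_nth A (hinf s), ansDec_eq_count, hnth, Nat.count_nth_of_infinite (hinf s)]
  · rw [ansDec_eq_count, ansEnc_eq_nth A (hinf (A m))]
    exact Nat.nth_count rfl

theorem stmt_15 {S : Type*} [Fintype S] [DecidableEq S] [Nonempty S]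
    (A : ℕ → S) (hA : ∀ (s : S) (N : ℕ), ∃ k : ℕ, N ≤ k ∧ A k = s) :
    (∀ (s : S) (n : ℕ), ansDec A (ansEnc A s n) = (s, n)) ∧
    (∀ m : ℕ, ansEnc A (ansDec A m).1 (ansDec A m).2 = m) :=
  stmt_15_general A hA
end
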